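/- Let M be a metric space, D ⊆ M a dense subset, let E and F be finite-dimensional inner product spaces over 𝕜 ∈ {ℝ, ℂ}, and let d : M → (F →L[𝕜] E) be a continuous family of linear maps such that finrank(range(d(y))) = k for every y ∈ D. Then for every x ∈ M there exist a sequence (y_n)_{n∈ℕ} in D converging to x and a subspace V of E with finrank V = k such that range(d(y_n)) converges to V in the gap metric, i.e. ‖P_{range(d(y_n))} − P_V‖ → 0. -/

import Mathlib

/-!
Orthonormal `k`-frames in `E` form a compact set, and the orthogonal projection onto the span of
an orthonormal frame `v` is `∑ i, rankOne (v i) (v i)`, which depends continuously on `v`. Hence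
every sequence of `k`-dimensional subspaces has a subsequence whose projections converge to the
projection onto a `k`-dimensional subspace (sequential compactness of the Grassmannian). Apply
this to the ranges of `d` along a sequence in `D` tending to `x`.
-/

open FiniteDimensional Filter Module

noncomputable def orthProjection {𝕜 E : Type*} [RCLike 𝕜] [NormedAddCommGroup E]
    [InnerProductSpace 𝕜 E] [FiniteDimensional 𝕜 E] (V : Submodule 𝕜 E) : E →L[𝕜] E :=
  V.subtypeL.comp (V.orthogonalProjectionOnto)

section Grassmannian

open InnerProductSpace Topology Set

variable {𝕜 E ι : Type*} [RCLike 𝕜] [NormedAddCommGroup E] [InnerProductSpace 𝕜 E]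

theorem Continuous.rankOne {X : Type*} [TopologicalSpace X] {f g : X → E} (hf : Continuous f)
    (hg : Continuous g) : Continuous fun x => rankOne 𝕜 (f x) (g x) := by
  simp only [rankOne_def]
  exact (ContinuousLinearMap.smulRightL 𝕜 E E).continuous₂.comp
    (((innerSL 𝕜).continuous.comp hg).prodMk hf)

theorem isClosed_setOf_orthonormal : IsClosed {v : ι → E | Orthonormal 𝕜 v} := by
  classical
  simp only [orthonormal_iff_ite, ofPred_forall]
  exact isClosed_iInter fun i => isClosed_iInter fun j =>
    isClosed_eq ((continuous_apply i).inner (continuous_apply j)) continuous_const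

variable [FiniteDimensional 𝕜 E]

theorem isCompact_setOf_orthonormal [Finite ι] : IsCompact {v : ι → E | Orthonormal 𝕜 v} :=
  have : ProperSpace E := FiniteDimensional.proper 𝕜 E
  (isCompact_univ_pi fun _ => isCompact_sphere (0 : E) 1).of_isClosed_subset
    isClosed_setOf_orthonormal fun _ hv i _ => mem_sphere_zero_iff_norm.2 (hv.1 i)

theorem orthProjection_eq_starProjection (V : Submodule 𝕜 E) :
    orthProjection V = V.starProjection := rfl

theorem orthProjection_span_eq_sum_rankOne [Fintype ι] {v : ι → E} (hv : Orthonormal 𝕜 v) :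
    orthProjection (Submodule.span 𝕜 (range v)) = ∑ i, rankOne 𝕜 (v i) (v i) := by
  have hb : Orthonormal 𝕜 (Basis.span hv.linearIndependent) := by
    rw [funext (Basis.span_apply hv.linearIndependent)]
    exact orthonormal_span hv
  rw [orthProjection_eq_starProjection, OrthonormalBasis.starProjection_eq_sum_rankOne
    ((Basis.span hv.linearIndependent).toOrthonormalBasis hb)]
  simp [Basis.span_apply]

theorem Submodule.exists_orthonormal_span_range_eq {k : ℕ} {V : Submodule 𝕜 E}
    (hV : finrank 𝕜 V = k) :
    ∃ v : Fin k → E, Orthonormal 𝕜 v ∧ Submodule.span 𝕜 (range v) = V := by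
  let b := (stdOrthonormalBasis 𝕜 V).reindex (finCongr hV)
  refine ⟨fun i => b i, b.orthonormal.comp_linearIsometry V.subtypeₗᵢ, ?_⟩
  rw [show (fun i => (b i : E)) = V.subtype ∘ b from rfl, range_comp, Submodule.span_image,
    ← b.coe_toBasis, b.toBasis.span_eq, Submodule.map_subtype_top]

theorem exists_subseq_tendsto_orthProjection {k : ℕ} (V : ℕ → Submodule 𝕜 E)
    (hV : ∀ n, finrank 𝕜 (V n) = k) :
    ∃ (W : Submodule 𝕜 E) (φ : ℕ → ℕ), finrank 𝕜 W = k ∧ StrictMono φ ∧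
      Tendsto (fun n => orthProjection (V (φ n))) atTop (𝓝 (orthProjection W)) := by
  choose v hv hspan using fun n => Submodule.exists_orthonormal_span_range_eq (hV n)
  obtain ⟨f, hf, φ, hφ, hvf⟩ := isCompact_setOf_orthonormal.tendsto_subseq hv
  have hcont : Continuous fun v : Fin k → E => ∑ i, rankOne 𝕜 (v i) (v i) :=
    continuous_finsetSum _ fun i _ => (continuous_apply i).rankOne (continuous_apply i)
  refine ⟨Submodule.span 𝕜 (range f), φ, ?_, hφ, ?_⟩
  · rw [finrank_span_eq_card hf.linearIndependent, Fintype.card_fin]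
  · simp only [← hspan, orthProjection_span_eq_sum_rankOne (hv _),
      orthProjection_span_eq_sum_rankOne hf]
    exact (hcont.tendsto f).comp hvf

end Grassmannian

theorem nash_fiber_nonempty_general {𝕜 E F M : Type*} [RCLike 𝕜]
    [NormedAddCommGroup E] [InnerProductSpace 𝕜 E] [FiniteDimensional 𝕜 E]
    [NormedAddCommGroup F] [InnerProductSpace 𝕜 F]
    [MetricSpace M] (D : Set M) (hD : Dense D) (k : ℕ)
    (d : M → (F →L[𝕜] E))
    (hrk : ∀ y ∈ D, finrank 𝕜 (LinearMap.range (d y : F →ₗ[𝕜] E)) = k) :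
    ∀ x : M, ∃ (y : ℕ → M) (V : Submodule 𝕜 E),
      (∀ n, y n ∈ D) ∧ Tendsto y atTop (nhds x) ∧ finrank 𝕜 V = k ∧
        Tendsto (fun n => ‖orthProjection (LinearMap.range (d (y n) : F →ₗ[𝕜] E)) - orthProjection V‖)
          atTop (nhds 0) := by
  intro x
  obtain ⟨y, hyD, hyx⟩ := mem_closure_iff_seq_limit.1 (hD x)
  obtain ⟨V, φ, hVk, hφ, hP⟩ := exists_subseq_tendsto_orthProjection
    (fun n => LinearMap.range (d (y n) : F →ₗ[𝕜] E)) fun n => hrk _ (hyD n)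
  exact ⟨y ∘ φ, V, fun n => hyD (φ n), hyx.comp hφ.tendsto_atTop, hVk,
    tendsto_iff_norm_sub_tendsto_zero.1 hP⟩

/-- For a continuous family `d` of linear maps of constant rank `k` on a dense subset `D`
of a metric space `M`, every point `x ∈ M` is the limit of a sequence `y n ∈ D` such that
the images `range (d (y n))` converge in the gap metric to some `k`-dimensional subspace
`V`; i.e. the fibers of the Nash blowup are non-empty. -/
theorem nash_fiber_nonempty {𝕜 E F M : Type*} [RCLike 𝕜]
    [NormedAddCommGroup E] [InnerProductSpace 𝕜 E] [FiniteDimensional 𝕜 E]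
    [NormedAddCommGroup F] [InnerProductSpace 𝕜 F] [FiniteDimensional 𝕜 F]
    [MetricSpace M] (D : Set M) (hD : Dense D) (k : ℕ)
    (d : M → (F →L[𝕜] E)) (hd : Continuous d)
    (hrk : ∀ y ∈ D, finrank 𝕜 (LinearMap.range (d y : F →ₗ[𝕜] E)) = k) :
    ∀ x : M, ∃ (y : ℕ → M) (V : Submodule 𝕜 E),
      (∀ n, y n ∈ D) ∧ Tendsto y atTop (nhds x) ∧ finrank 𝕜 V = k ∧
        Tendsto (fun n => ‖orthProjection (LinearMap.range (d (y n) : F →ₗ[𝕜] E)) - orthProjection V‖)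
          atTop (nhds 0) :=
  nash_fiber_nonempty_general D hD k d hrk
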